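/- The three distinct binary phylogenetic trees on the leaf set {a,b,c} cannot all be displayed by a single normal network on {a,b,c}. -/

import Mathlib

structure Net (X : Type) where
  V : Type
  fintypeV : Fintype V
  E : V → V → Prop
  root : V
  leaf : X → V
  leaf_inj : Function.Injective leaf
  acyclic : ∀ v : V, ¬ Relation.TransGen E v v
  no_in_root : ∀ u : V, ¬ E u root
  connected : ∀ v : V, Relation.ReflTransGen E root v

namespace Net

variable {X : Type} (N : Net X)

noncomputable instance : Fintype N.V := N.fintypeV

/-- The in-degree of a vertex. -/
noncomputable def indeg (v : N.V) : ℕ := {u : N.V | N.E u v}.ncard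

/-- The out-degree of a vertex. -/
noncomputable def outdeg (v : N.V) : ℕ := {u : N.V | N.E v u}.ncard

/-- A vertex is a leaf if it is labelled by an element of `X`. -/
def IsLeaf (v : N.V) : Prop := ∃ x : X, N.leaf x = v

/-- `N` is a (rooted) phylogenetic network on `X`: the root has out-degree two, the
leaves are exactly the out-degree-zero vertices and have in-degree one, and every
other vertex is a tree vertex (in-degree one, out-degree two) or a reticulation
(in-degree at least two, out-degree one). -/
def ValidNet : Prop :=
  N.outdeg N.root = 2 ∧
  (∀ x : X, N.indeg (N.leaf x) = 1 ∧ N.outdeg (N.leaf x) = 0) ∧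
  (∀ v : N.V, N.outdeg v = 0 → N.IsLeaf v) ∧
  (∀ v : N.V, v ≠ N.root → ¬ N.IsLeaf v →
    (N.indeg v = 1 ∧ N.outdeg v = 2) ∨ (2 ≤ N.indeg v ∧ N.outdeg v = 1))

/-- A reticulation is a vertex of in-degree at least two. -/
def IsReticulation (v : N.V) : Prop := 2 ≤ N.indeg v

/-- `N` is binary if every reticulation has in-degree exactly two. -/
def Binary : Prop := ∀ v : N.V, N.IsReticulation v → N.indeg v = 2

/-- `N` is tree-child: every non-leaf vertex has a child of in-degree at most one
(i.e. a child that is a tree vertex or a leaf). -/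
def TreeChild : Prop := ∀ v : N.V, ¬ N.IsLeaf v → ∃ c : N.V, N.E v c ∧ N.indeg c ≤ 1

/-- The reticulation edge `(u,v)` is a shortcut: there is a directed path from `u`
to `v` avoiding the edge `(u,v)`. -/
def Shortcut (u v : N.V) : Prop :=
  N.E u v ∧ 2 ≤ N.indeg v ∧ ∃ p : N.V, p ≠ u ∧ N.E p v ∧ Relation.ReflTransGen N.E u p

def HasNoShortcut : Prop := ∀ u v : N.V, ¬ N.Shortcut u v

/-- `N` is a normal network: a tree-child phylogenetic network with no shortcut. -/
def Normal : Prop := N.ValidNet ∧ N.TreeChild ∧ N.HasNoShortcut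

/-- `N` is a (rooted) binary phylogenetic `X`-tree: a phylogenetic network with
no reticulations. -/
def IsBinTree : Prop := N.ValidNet ∧ ∀ v : N.V, N.indeg v ≤ 1

/-- There is a tree path from `v` to the leaf labelled `x`: a directed path all of
whose vertices except possibly `v` are tree vertices or leaves. -/
def TreePathTo (v : N.V) (x : X) : Prop :=
  Relation.ReflTransGen (fun a b => N.E a b ∧ N.indeg b ≤ 1) v (N.leaf x)

/-- The hybridisation number `h(N) = ∑_{v ≠ root} (indeg v − 1)`. -/
noncomputable def hyb : ℕ := ∑ v : N.V, (N.indeg v - 1)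

/-- The number of reticulations of `N`. -/
noncomputable def numRetic : ℕ := {v : N.V | N.IsReticulation v}.ncard

/-- The number of shortcuts of `N`. -/
noncomputable def numShortcuts : ℕ := {q : N.V × N.V | N.Shortcut q.1 q.2}.ncard

/-- The length of the shortcut `(u,v)`: the number of vertices in the union of the
vertex sets of all directed paths from `u` to a parent of `v`. -/
noncomputable def scLen (u v : N.V) : ℕ :=
  {w : N.V | ∃ p : N.V, N.E p v ∧ Relation.ReflTransGen N.E u w ∧
    Relation.ReflTransGen N.E w p}.ncard

/-- `{a, b}` is a cherry: the leaves labelled `a` and `b` have a common parent. -/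
def Cherry (a b : X) : Prop :=
  a ≠ b ∧ ∃ p : N.V, N.E p (N.leaf a) ∧ N.E p (N.leaf b)

/-- `{a, b}` is a reticulated cherry with reticulation leaf `a`: the parent of `a`
is a reticulation and the parent of `b` is one of its parents. -/
def RetCherry (a b : X) : Prop :=
  a ≠ b ∧ ∃ pa pb : N.V, N.E pa (N.leaf a) ∧ N.E pb (N.leaf b) ∧
    N.IsReticulation pa ∧ N.E pb pa

/-- The cluster of a vertex: the set of leaf labels reachable from it. -/
def cluster (v : N.V) : Set X := {x : X | Relation.ReflTransGen N.E v (N.leaf x)}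

/-- Isomorphism of phylogenetic networks on `X`. -/
def Iso (M : Net X) : Prop :=
  ∃ e : N.V ≃ M.V, (∀ u v : N.V, N.E u v ↔ M.E (e u) (e v)) ∧
    ∀ x : X, e (N.leaf x) = M.leaf x

end Net

/-- An embedding of the tree `T` in the network `N`: an injective map on vertices
(respecting leaf labels) together with, for each edge of `T`, a directed path in `N`
between the images, such that internal vertices of these paths avoid the image of
the map and paths of distinct edges are internally disjoint. -/
structure Emb {X : Type} (N T : Net X) where
  φ : T.V → N.V
  inj : Function.Injective φ
  leafmap : ∀ x : X, φ (T.leaf x) = N.leaf x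
  paths : T.V → T.V → List N.V
  chain : ∀ u v : T.V, T.E u v → List.Chain' N.E (φ u :: paths u v ++ [φ v])
  internal : ∀ u v : T.V, T.E u v → ∀ w ∈ paths u v, w ∉ Set.range φ
  disjoint : ∀ u v u' v' : T.V, T.E u v → T.E u' v' → (u, v) ≠ (u', v') →
    ∀ w ∈ paths u v, w ∉ paths u' v'

/-- The vertex list of the path used for the tree edge `(u,v)`. -/
def Emb.pathList {X : Type} {N T : Net X} (e : Emb N T) (u v : T.V) : List N.V :=
  e.φ u :: e.paths u v ++ [e.φ v]

/-- The set of edges of `N` used by the embedding. -/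
def Emb.edges {X : Type} {N T : Net X} (e : Emb N T) : Set (N.V × N.V) :=
  {q : N.V × N.V | ∃ u v : T.V, T.E u v ∧
    q ∈ (e.pathList u v).zip (e.pathList u v).tail}

/-- `N` displays the tree `T`. -/
def Net.Displays {X : Type} (N T : Net X) : Prop := Nonempty (Emb N T)

/-- The set of clusters of a tree (or network). -/
def Net.clusterSet {X : Type} (T : Net X) : Set (Set X) :=
  {C : Set X | ∃ v : T.V, T.cluster v = C}

/-- The display set of `N` is, up to isomorphism, the set `P` of binary
phylogenetic `X`-trees. -/
def Net.DisplaySetIs {X : Type} (N : Net X) (P : Set (Net X)) : Prop :=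
  ∀ T : Net X, T.IsBinTree → (N.Displays T ↔ ∃ S ∈ P, T.Iso S)

/-- `P` is tightly normal compatible: it is the display set of a binary normal
network on `X`. -/
def TightlyNC {X : Type} (P : Set (Net X)) : Prop :=
  ∃ N : Net X, N.Normal ∧ N.Binary ∧ N.DisplaySetIs P

/-!
A binary tree on three leaves is determined up to isomorphism by its outgroup `z`, the leaf
adjacent to the root; the other two leaves form a cherry below a non-root vertex. So three
pairwise non-isomorphic trees have three distinct outgroups, and every pair of leaves is the
cherry of one of them. An embedding maps that cherry vertex to a non-root common ancestor of
the pair in the network. But in a normal network the children of the root are tree vertices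
(there is no shortcut) and each has a tree path to some leaf (tree-child); tree paths from
distinct children of the root never meet, so these two leaves have no common ancestor other
than the root.
-/

open Relation

theorem Relation.ReflTransGen.total_of_left_unique {α : Type*} {r : α → α → Prop} {a b c : α}
    (U : Relator.LeftUnique r) (ha : ReflTransGen r a c) (hb : ReflTransGen r b c) :
    ReflTransGen r a b ∨ ReflTransGen r b a := by
  rw [← reflTransGen_swap] at ha hb ⊢
  rw [← reflTransGen_swap (r := r) (a := a)]
  exact total_of_right_unique (fun _ _ _ h h' => U h h') hb ha

lemma List.transGen_of_isChain_cons_append {α : Type*} {r : α → α → Prop} :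
    ∀ (l : List α) (a b : α), IsChain r (a :: l ++ [b]) → TransGen r a b
  | [], a, b, h => .single (isChain_pair.mp h)
  | x :: l, a, b, h => by
    obtain ⟨hax, h⟩ := isChain_cons_cons.mp h
    exact .head hax (transGen_of_isChain_cons_append l x b h)

namespace Net

variable {X : Type} {N : Net X}

/-- `N.TreePathTo v x` unfolds to a `ReflTransGen N.TreeArc` path. -/
def TreeArc (N : Net X) (u v : N.V) : Prop := N.E u v ∧ N.indeg v ≤ 1

lemma parent_unique {u u' v : N.V} (hv : N.indeg v ≤ 1) (h : N.E u v) (h' : N.E u' v) :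
    u = u' :=
  (Set.ncard_le_one (Set.toFinite _)).mp hv _ h _ h'

lemma treeArc_leftUnique : Relator.LeftUnique N.TreeArc :=
  fun _ _ _ h h' => parent_unique h.2 h.1 h'.1

lemma TreeArc.reflTransGen {u v : N.V} (h : ReflTransGen N.TreeArc u v) :
    ReflTransGen N.E u v :=
  ReflTransGen.mono (fun _ _ h => h.1) _ _ h

lemma ne_root_of_edge {u v : N.V} (h : N.E u v) : v ≠ N.root :=
  fun hv => N.no_in_root u (hv ▸ h)

lemma eq_root_of_reflTransGen {v : N.V} (h : ReflTransGen N.E v N.root) : v = N.root := by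
  rcases h.cases_tail with h | ⟨u, _, hu⟩
  · exact h.symm
  · exact absurd hu (N.no_in_root u)

lemma exists_parent {v : N.V} (hv : v ≠ N.root) : ∃ u, N.E u v := by
  rcases (N.connected v).cases_tail with h | ⟨u, _, hu⟩
  · exact absurd h hv
  · exact ⟨u, hu⟩

lemma indeg_root : N.indeg N.root = 0 := by
  simp [indeg, N.no_in_root]

lemma wellFounded_child : WellFounded (fun a b : N.V => N.E b a) := by
  have : IsTrans N.V (fun a b => TransGen N.E b a) := ⟨fun _ _ _ h h' => h'.trans h⟩
  have : Std.Irrefl (fun a b : N.V => TransGen N.E b a) := ⟨N.acyclic⟩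
  exact Subrelation.wf (fun h => TransGen.single h) (Finite.wellFounded_of_trans_of_irrefl _)

lemma not_reflTransGen_sibling {u c₁ c₂ : N.V} (hc₂ : N.indeg c₂ ≤ 1) (h₁ : N.E u c₁)
    (h₂ : N.E u c₂) (hne : c₁ ≠ c₂) : ¬ ReflTransGen N.E c₁ c₂ := by
  intro h
  rcases h.cases_tail with h | ⟨w, hw, hwc⟩
  · exact hne h.symm
  · rw [parent_unique hc₂ hwc h₂] at hw
    exact N.acyclic u (TransGen.head' h₁ hw)

lemma TreeChild.exists_treePathTo (h : N.TreeChild) (v : N.V) : ∃ x, N.TreePathTo v x := by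
  induction v using wellFounded_child.induction with
  | _ v ih =>
    by_cases hv : N.IsLeaf v
    · obtain ⟨x, rfl⟩ := hv
      exact ⟨x, .refl⟩
    · obtain ⟨c, hc, hdeg⟩ := h v hv
      obtain ⟨x, hx⟩ := ih c hc
      exact ⟨x, .head ⟨hc, hdeg⟩ hx⟩

/-- Tree arcs enter vertices with a unique parent, so a path can only join a tree path at its
start. -/
lemma reflTransGen_or_of_treeArc {v w u : N.V} (hvw : ReflTransGen N.TreeArc v w)
    (huw : ReflTransGen N.E u w) : ReflTransGen N.E u v ∨ ReflTransGen N.TreeArc v u := by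
  induction hvw generalizing u with
  | refl => exact .inl huw
  | @tail w' w hvw' hw' ih =>
    rcases huw.cases_tail with rfl | ⟨w'', huw'', hw''⟩
    · exact .inr (hvw'.tail hw')
    · exact ih (parent_unique hw'.2 hw'' hw'.1 ▸ huw'')

section ValidNet

variable (hN : N.ValidNet)
include hN

lemma ValidNet.not_edge_leaf {x : X} {v : N.V} : ¬ N.E (N.leaf x) v := by
  intro h
  have := (hN.2.1 x).2
  rw [outdeg, Set.ncard_eq_zero (Set.toFinite _)] at this
  exact this.subset h

lemma ValidNet.leaf_ne_root (x : X) : N.leaf x ≠ N.root := by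
  intro h
  have := (hN.2.1 x).1
  rw [h, indeg_root] at this
  exact zero_ne_one this

lemma ValidNet.eq_of_reflTransGen_leaf {x : X} {v : N.V}
    (h : ReflTransGen N.E (N.leaf x) v) : v = N.leaf x := by
  rcases h.cases_head with h | ⟨c, hc, _⟩
  · exact h.symm
  · exact absurd hc hN.not_edge_leaf

lemma ValidNet.cluster_leaf (x : X) : N.cluster (N.leaf x) = {x} := by
  ext y
  exact ⟨fun h => N.leaf_inj (hN.eq_of_reflTransGen_leaf h), fun h => h ▸ .refl⟩

lemma ValidNet.exists_child {v : N.V} (hv : ¬ N.IsLeaf v) : ∃ c, N.E v c := by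
  by_contra! h
  exact hv (hN.2.2.1 v (by simp [outdeg, h]))

lemma ValidNet.exists_two_children_root :
    ∃ c₁ c₂, c₁ ≠ c₂ ∧ N.E N.root c₁ ∧ N.E N.root c₂ := by
  obtain ⟨c₁, c₂, hne, h⟩ := Set.ncard_eq_two.mp hN.1
  exact ⟨c₁, c₂, hne, (Set.ext_iff.mp h c₁).mpr (by simp),
    (Set.ext_iff.mp h c₂).mpr (by simp)⟩

end ValidNet

lemma HasNoShortcut.indeg_le_one_of_root_edge (hN : N.HasNoShortcut) {c : N.V}
    (hc : N.E N.root c) : N.indeg c ≤ 1 := by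
  by_contra! h
  obtain ⟨q₁, hq₁, q₂, hq₂, hne⟩ := (Set.one_lt_ncard (Set.toFinite _)).mp h
  obtain ⟨q, hq, hqc⟩ : ∃ q, q ≠ N.root ∧ N.E q c := by
    by_cases h₁ : q₁ = N.root
    · exact ⟨q₂, fun h₂ => hne (h₁.trans h₂.symm), hq₂⟩
    · exact ⟨q₁, h₁, hq₁⟩
  exact hN N.root c ⟨hc, h, q, hq, hqc, N.connected q⟩

lemma HasNoShortcut.treeArc_of_root_edge (hN : N.HasNoShortcut) {c v : N.V} {x : X}
    (hc : N.E N.root c) (hcx : N.TreePathTo c x) (hvx : ReflTransGen N.E v (N.leaf x))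
    (hv : v ≠ N.root) : ReflTransGen N.TreeArc c v := by
  rcases reflTransGen_or_of_treeArc hcx hvx with hvc | hcv
  · rcases hvc.cases_tail with rfl | ⟨w, hvw, hwc⟩
    · exact .refl
    · rw [parent_unique (hN.indeg_le_one_of_root_edge hc) hwc hc] at hvw
      exact absurd (eq_root_of_reflTransGen hvw) hv
  · exact hcv

theorem Normal.exists_leaves_only_root_common_ancestor (hN : N.Normal) :
    ∃ x y : X, ∀ v, ReflTransGen N.E v (N.leaf x) → ReflTransGen N.E v (N.leaf y) →
      v = N.root := by
  obtain ⟨hval, htc, hsc⟩ := hN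
  obtain ⟨c₁, c₂, hne, h₁, h₂⟩ := hval.exists_two_children_root
  obtain ⟨x, hx⟩ := htc.exists_treePathTo c₁
  obtain ⟨y, hy⟩ := htc.exists_treePathTo c₂
  refine ⟨x, y, fun v hvx hvy => ?_⟩
  by_contra hv
  rcases (hsc.treeArc_of_root_edge h₁ hx hvx hv).total_of_left_unique treeArc_leftUnique
    (hsc.treeArc_of_root_edge h₂ hy hvy hv) with h | h
  · exact not_reflTransGen_sibling (hsc.indeg_le_one_of_root_edge h₂) h₁ h₂ hne
      (TreeArc.reflTransGen h)
  · exact not_reflTransGen_sibling (hsc.indeg_le_one_of_root_edge h₁) h₂ h₁ hne.symm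
      (TreeArc.reflTransGen h)

end Net

namespace Emb

variable {X : Type} {N T : Net X} (e : Emb N T)

lemma transGen_of_edge {u v : T.V} (h : T.E u v) : TransGen N.E (e.φ u) (e.φ v) :=
  List.transGen_of_isChain_cons_append _ _ _ (e.chain u v h)

lemma reflTransGen_map {u v : T.V} (h : ReflTransGen T.E u v) :
    ReflTransGen N.E (e.φ u) (e.φ v) :=
  ReflTransGen.lift' e.φ (fun _ _ h => (e.transGen_of_edge h).to_reflTransGen) _ _ h

lemma map_ne_root {v : T.V} (hv : v ≠ T.root) : e.φ v ≠ N.root := by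
  obtain ⟨u, hu⟩ := Net.exists_parent hv
  obtain ⟨w, -, hw⟩ := TransGen.tail'_iff.mp (e.transGen_of_edge hu)
  exact Net.ne_root_of_edge hw

end Emb

namespace Net

variable {X : Type} {T : Net X}

lemma ValidNet.root_not_isLeaf (hT : T.ValidNet) : ¬ T.IsLeaf T.root :=
  fun ⟨x, hx⟩ => hT.leaf_ne_root x hx

lemma TreeChild.cluster_nonempty (hT : T.TreeChild) (v : T.V) : (T.cluster v).Nonempty :=
  let ⟨x, hx⟩ := hT.exists_treePathTo v
  ⟨x, TreeArc.reflTransGen hx⟩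

lemma cluster_eq_union_of_children {v c₁ c₂ : T.V} (hv : ¬ T.IsLeaf v)
    (h : ∀ c, T.E v c ↔ c = c₁ ∨ c = c₂) : T.cluster v = T.cluster c₁ ∪ T.cluster c₂ := by
  ext x
  constructor
  · intro hx
    rcases hx.cases_head with hvx | ⟨c, hc, hcx⟩
    · exact absurd ⟨x, hvx.symm⟩ hv
    · rcases (h c).mp hc with rfl | rfl
      exacts [.inl hcx, .inr hcx]
  · rintro (hx | hx)
    exacts [.head ((h _).mpr (.inl rfl)) hx, .head ((h _).mpr (.inr rfl)) hx]

section IsBinTree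

variable (hT : T.IsBinTree)
include hT

lemma IsBinTree.treeChild : T.TreeChild := fun _ hv =>
  let ⟨c, hc⟩ := hT.1.exists_child hv
  ⟨c, hc, hT.2 c⟩

lemma IsBinTree.exists_children {v : T.V} (hv : ¬ T.IsLeaf v) :
    ∃ c₁ c₂, c₁ ≠ c₂ ∧ ∀ c, T.E v c ↔ c = c₁ ∨ c = c₂ := by
  have hout : T.outdeg v = 2 := by
    by_cases hr : v = T.root
    · exact hr ▸ hT.1.1
    · rcases hT.1.2.2.2 v hr hv with h | h
      · exact h.2
      · exact absurd h.1 (by have := hT.2 v; omega)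
  obtain ⟨c₁, c₂, hne, h⟩ := Set.ncard_eq_two.mp hout
  exact ⟨c₁, c₂, hne, fun c => by simpa using Set.ext_iff.mp h c⟩

lemma IsBinTree.disjoint_cluster {u c₁ c₂ : T.V} (h₁ : T.E u c₁) (h₂ : T.E u c₂)
    (hne : c₁ ≠ c₂) : Disjoint (T.cluster c₁) (T.cluster c₂) :=
  Set.disjoint_left.mpr fun _ hx₁ hx₂ =>
    (ReflTransGen.total_of_left_unique (r := T.E)
      (fun _ _ _ h h' => parent_unique (hT.2 _) h h') hx₁ hx₂).elim
      (not_reflTransGen_sibling (hT.2 c₂) h₁ h₂ hne)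
      (not_reflTransGen_sibling (hT.2 c₁) h₂ h₁ hne.symm)

variable [Finite X]

lemma IsBinTree.exists_cluster_split {v : T.V} (hv : ¬ T.IsLeaf v) :
    ∃ c₁ c₂, (∀ c, T.E v c ↔ c = c₁ ∨ c = c₂) ∧
      T.cluster v = T.cluster c₁ ∪ T.cluster c₂ ∧
      (T.cluster c₁).ncard + (T.cluster c₂).ncard = (T.cluster v).ncard ∧
      0 < (T.cluster c₁).ncard ∧ 0 < (T.cluster c₂).ncard := by
  obtain ⟨c₁, c₂, hne, h⟩ := hT.exists_children hv
  have hunion := cluster_eq_union_of_children hv h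
  refine ⟨c₁, c₂, h, hunion, ?_, (Set.ncard_pos).mpr (hT.treeChild.cluster_nonempty c₁),
    (Set.ncard_pos).mpr (hT.treeChild.cluster_nonempty c₂)⟩
  rw [hunion, Set.ncard_union_eq
    (hT.disjoint_cluster ((h _).mpr (.inl rfl)) ((h _).mpr (.inr rfl)) hne)]

lemma IsBinTree.eq_leaf_of_cluster_eq_singleton {v : T.V} {z : X}
    (h : T.cluster v = {z}) : v = T.leaf z := by
  by_cases hv : T.IsLeaf v
  · obtain ⟨w, rfl⟩ := hv
    rw [hT.1.cluster_leaf, Set.singleton_eq_singleton_iff] at h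
    rw [h]
  · obtain ⟨c₁, c₂, -, -, hcard, h₁, h₂⟩ := hT.exists_cluster_split hv
    rw [h, Set.ncard_singleton] at hcard
    omega

end IsBinTree

def IsRootSplit (T : Net X) (z : X) (p : T.V) : Prop :=
  ¬ T.IsLeaf p ∧ T.E T.root p ∧ T.E T.root (T.leaf z) ∧ ∀ w, w ≠ z → T.E p (T.leaf w)

lemma IsBinTree.isRootSplit_of_ncard [Finite X] (hT : T.IsBinTree) {p q : T.V}
    (hroot : ∀ c, T.E T.root c ↔ c = p ∨ c = q)
    (hcover : T.cluster T.root = T.cluster p ∪ T.cluster q)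
    (hp : (T.cluster p).ncard = 2) (hq : (T.cluster q).ncard = 1) :
    ∃ z, T.IsRootSplit z p := by
  obtain ⟨z, hz⟩ := Set.ncard_eq_one.mp hq
  have hpl : ¬ T.IsLeaf p := by
    rintro ⟨w, rfl⟩
    rw [hT.1.cluster_leaf, Set.ncard_singleton] at hp
    exact absurd hp (by decide)
  obtain ⟨d₁, d₂, hpd, hunion, hcard, h₁, h₂⟩ := hT.exists_cluster_split hpl
  obtain ⟨w₁, hw₁⟩ := Set.ncard_eq_one.mp (show (T.cluster d₁).ncard = 1 by omega)
  obtain ⟨w₂, hw₂⟩ := Set.ncard_eq_one.mp (show (T.cluster d₂).ncard = 1 by omega)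
  refine ⟨z, hpl, (hroot p).mpr (.inl rfl),
    hT.eq_leaf_of_cluster_eq_singleton hz ▸ (hroot q).mpr (.inr rfl), fun w hw => ?_⟩
  have hwp : w ∈ T.cluster p := by
    have hw' : w ∈ T.cluster T.root := T.connected _
    rw [hcover, hz] at hw'
    exact hw'.resolve_right hw
  rw [hunion, hw₁, hw₂] at hwp
  rcases hwp with rfl | rfl
  · exact (hpd _).mpr (.inl (hT.eq_leaf_of_cluster_eq_singleton hw₁).symm)
  · exact (hpd _).mpr (.inr (hT.eq_leaf_of_cluster_eq_singleton hw₂).symm)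

/-- The clusters of the two children of the root split `X` into parts of sizes `1` and `2`. -/
theorem IsBinTree.exists_isRootSplit [Finite X] (hX : Nat.card X = 3) (hT : T.IsBinTree) :
    ∃ z p, T.IsRootSplit z p := by
  obtain ⟨r₁, r₂, hroot, hcover, hcard, h₁, h₂⟩ :=
    hT.exists_cluster_split hT.1.root_not_isLeaf
  rw [show T.cluster T.root = Set.univ from Set.eq_univ_of_forall fun _ => T.connected _,
    Set.ncard_univ, hX] at hcard
  rcases (by omega : (T.cluster r₁).ncard = 2 ∧ (T.cluster r₂).ncard = 1 ∨
      (T.cluster r₂).ncard = 2 ∧ (T.cluster r₁).ncard = 1) with ⟨hp, hq⟩ | ⟨hp, hq⟩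
  · obtain ⟨z, hz⟩ := hT.isRootSplit_of_ncard hroot hcover hp hq
    exact ⟨z, r₁, hz⟩
  · obtain ⟨z, hz⟩ := hT.isRootSplit_of_ncard (fun c => (hroot c).trans or_comm)
      (hcover.trans (Set.union_comm _ _)) hp hq
    exact ⟨z, r₂, hz⟩

/-- Under `T.IsRootSplit z p`, `none`, `some none` and `some (some x)` stand for the root, `p`
and the leaf `x`. -/
def rootSplitVertex (T : Net X) (p : T.V) : Option (Option X) → T.V
  | none => T.root
  | some none => p
  | some (some x) => T.leaf x

def rootSplitAdj (z : X) : Option (Option X) → Option (Option X) → Prop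
  | none, some none => True
  | none, some (some w) => w = z
  | some none, some (some w) => w ≠ z
  | _, _ => False

namespace IsRootSplit

variable {z : X} {p : T.V} (h : T.IsRootSplit z p)
include h

lemma injective (hT : T.ValidNet) : Function.Injective (T.rootSplitVertex p) := by
  have hp : p ≠ T.root := ne_root_of_edge h.2.1
  rintro (_ | _ | a) (_ | _ | b) hab <;> simp only [rootSplitVertex] at hab
  · rfl
  · exact absurd hab.symm hp
  · exact absurd hab.symm (hT.leaf_ne_root b)
  · exact absurd hab hp
  · rfl
  · exact absurd ⟨b, hab.symm⟩ h.1
  · exact absurd hab (hT.leaf_ne_root a)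
  · exact absurd ⟨a, hab⟩ h.1
  · rw [T.leaf_inj hab]

lemma edge_of_rootSplitAdj {a b : Option (Option X)} (hab : rootSplitAdj z a b) :
    T.E (T.rootSplitVertex p a) (T.rootSplitVertex p b) := by
  rcases a with _ | _ | a <;> rcases b with _ | _ | b <;> simp only [rootSplitAdj] at hab
  · exact h.2.1
  · exact hab ▸ h.2.2.1
  · exact h.2.2.2 b hab

variable (hT : T.IsBinTree)
include hT

lemma exists_eq_of_edge {v : T.V} {b : Option (Option X)}
    (hv : T.E v (T.rootSplitVertex p b)) :
    ∃ a, v = T.rootSplitVertex p a ∧ rootSplitAdj z a b := by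
  obtain ⟨a, hab⟩ : ∃ a, rootSplitAdj z a b := by
    rcases b with _ | _ | b
    · exact absurd hv (T.no_in_root v)
    · exact ⟨none, trivial⟩
    · by_cases hb : b = z
      exacts [⟨none, hb⟩, ⟨some none, hb⟩]
  exact ⟨a, parent_unique (hT.2 _) hv (h.edge_of_rootSplitAdj hab), hab⟩

lemma edge_iff (a b : Option (Option X)) :
    T.E (T.rootSplitVertex p a) (T.rootSplitVertex p b) ↔ rootSplitAdj z a b := by
  refine ⟨fun hab => ?_, h.edge_of_rootSplitAdj⟩
  obtain ⟨a', ha', hadj⟩ := h.exists_eq_of_edge hT hab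
  rwa [h.injective hT.1 ha']

lemma surjective : Function.Surjective (T.rootSplitVertex p) := by
  have hanc : ∀ v w, ReflTransGen T.E v w → w ∈ Set.range (T.rootSplitVertex p) →
      v ∈ Set.range (T.rootSplitVertex p) := by
    intro v w hvw
    induction hvw using ReflTransGen.head_induction_on with
    | refl => exact id
    | head hvv' _ ih =>
      intro hw
      obtain ⟨b, rfl⟩ := ih hw
      obtain ⟨a, rfl, -⟩ := h.exists_eq_of_edge hT hvv'
      exact ⟨a, rfl⟩
  intro v
  obtain ⟨x, hx⟩ := hT.treeChild.cluster_nonempty v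
  exact hanc v _ hx ⟨some (some x), rfl⟩

lemma bijective : Function.Bijective (T.rootSplitVertex p) :=
  ⟨h.injective hT.1, h.surjective hT⟩

theorem iso {T' : Net X} {p' : T'.V} (h' : T'.IsRootSplit z p') (hT' : T'.IsBinTree) :
    T.Iso T' := by
  let e := (Equiv.ofBijective _ (h.bijective hT)).symm.trans
    (Equiv.ofBijective _ (h'.bijective hT'))
  have he : ∀ a, e (T.rootSplitVertex p a) = T'.rootSplitVertex p' a := fun a => by
    simp [e, Equiv.ofBijective_symm_apply_apply]
  refine ⟨e, fun u v => ?_, fun x => he (some (some x))⟩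
  obtain ⟨a, rfl⟩ := h.surjective hT u
  obtain ⟨b, rfl⟩ := h.surjective hT v
  rw [he, he, h.edge_iff hT, h'.edge_iff hT']

end IsRootSplit

lemma IsRootSplit.not_displays {N : Net X} {z x y : X} {p : T.V} (h : T.IsRootSplit z p)
    (hxy : ∀ v, ReflTransGen N.E v (N.leaf x) → ReflTransGen N.E v (N.leaf y) → v = N.root)
    (hx : x ≠ z) (hy : y ≠ z) : ¬ N.Displays T := by
  rintro ⟨e⟩
  refine e.map_ne_root (ne_root_of_edge h.2.1) (hxy _ ?_ ?_)
  · rw [← e.leafmap]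
    exact e.reflTransGen_map (.single (h.2.2.2 x hx))
  · rw [← e.leafmap]
    exact e.reflTransGen_map (.single (h.2.2.2 y hy))

end Net

lemma Fin.three_distinct_avoid_pair : ∀ z₁ z₂ z₃ x y : Fin 3, z₁ ≠ z₂ → z₁ ≠ z₃ → z₂ ≠ z₃ →
    (x ≠ z₁ ∧ y ≠ z₁) ∨ (x ≠ z₂ ∧ y ≠ z₂) ∨ (x ≠ z₃ ∧ y ≠ z₃) := by
  decide

/-- The three distinct binary phylogenetic trees on a 3-element leaf
set cannot all be displayed by a single normal network. -/
theorem stmt8 (T₁ T₂ T₃ : Net (Fin 3))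
    (h₁ : T₁.IsBinTree) (h₂ : T₂.IsBinTree) (h₃ : T₃.IsBinTree)
    (h12 : ¬ T₁.Iso T₂) (h13 : ¬ T₁.Iso T₃) (h23 : ¬ T₂.Iso T₃) :
    ¬ ∃ N : Net (Fin 3), N.Normal ∧ N.Displays T₁ ∧ N.Displays T₂ ∧
      N.Displays T₃ := by
  rintro ⟨N, hN, hd₁, hd₂, hd₃⟩
  obtain ⟨x, y, hxy⟩ := hN.exists_leaves_only_root_common_ancestor
  obtain ⟨z₁, p₁, hs₁⟩ := h₁.exists_isRootSplit (Nat.card_fin 3)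
  obtain ⟨z₂, p₂, hs₂⟩ := h₂.exists_isRootSplit (Nat.card_fin 3)
  obtain ⟨z₃, p₃, hs₃⟩ := h₃.exists_isRootSplit (Nat.card_fin 3)
  have hz₁₂ : z₁ ≠ z₂ := by rintro rfl; exact h12 (hs₁.iso h₁ hs₂ h₂)
  have hz₁₃ : z₁ ≠ z₃ := by rintro rfl; exact h13 (hs₁.iso h₁ hs₃ h₃)
  have hz₂₃ : z₂ ≠ z₃ := by rintro rfl; exact h23 (hs₂.iso h₂ hs₃ h₃)
  rcases Fin.three_distinct_avoid_pair z₁ z₂ z₃ x y hz₁₂ hz₁₃ hz₂₃ with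
    ⟨hx, hy⟩ | ⟨hx, hy⟩ | ⟨hx, hy⟩
  exacts [hs₁.not_displays hxy hx hy hd₁, hs₂.not_displays hxy hx hy hd₂,
    hs₃.not_displays hxy hx hy hd₃]
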